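/- arXiv:2506.02420 — 5 statements merged into one kernel-verified Lean document; each statement's English description precedes it below -/
import Mathlib

section
/- Let (x,y) be uniformly distributed on the square [-D/2, D/2] × [-D/2, D/2] and let Z = x² + y² + d². Then for d² + D²/4 ≤ z < d² + D²/2, the CDF of Z is F_Z(z) = (2D√(z - d² - D²/4) + 4(z - d²)·arcsin(D/(2√(z - d²))) - π(z - d²))/D². -/
/-!
Slice along the first coordinate and put `r² = z - d²`, `c = D / 2`. The slice of the
square–disk intersection at `x` is the segment `|y| ≤ min c √(r² - x²)`. For
`|x| ≤ a := √(r² - c²)` the square's edge is the binding constraint, beyond it the circle, whose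
part integrates through the primitive `(x √(r² - x²) + r² arcsin (x / r)) / 2` of `√(r² - x²)`.
Since `a² + c² = r²`, the angles `arcsin (a / r)` and `arcsin (c / r)` are complementary, which
produces the `π r²` term.
-/

open MeasureTheory Set Real intervalIntegral

lemma sqrt_one_sub_div_sq {r x : ℝ} (hr : 0 < r) : √(1 - (x / r) ^ 2) = √(r ^ 2 - x ^ 2) / r := by
  rw [← sqrt_sq hr.le, ← sqrt_div' _ (sq_nonneg r), sqrt_sq hr.le]
  congr 1
  field_simp

noncomputable def sqrtSqSubSqPrimitive (r x : ℝ) : ℝ :=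
  (x * √(r ^ 2 - x ^ 2) + r ^ 2 * arcsin (x / r)) / 2

lemma hasDerivAt_sqrtSqSubSqPrimitive {r x : ℝ} (hr : 0 < r) (hx : |x| < r) :
    HasDerivAt (sqrtSqSubSqPrimitive r) √(r ^ 2 - x ^ 2) x := by
  have hpos : 0 < r ^ 2 - x ^ 2 := by nlinarith [sq_abs x, abs_nonneg x]
  have hxr : |x / r| < 1 := by rwa [abs_div, abs_of_pos hr, div_lt_one hr]
  have hsqrt : HasDerivAt (fun t => √(r ^ 2 - t ^ 2)) (-(2 * x) / (2 * √(r ^ 2 - x ^ 2))) x := by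
    simpa using ((hasDerivAt_pow 2 x).const_sub (r ^ 2)).sqrt hpos.ne'
  have harcsin : HasDerivAt (fun t => arcsin (t / r)) (1 / √(1 - (x / r) ^ 2) * (1 / r)) x := by
    have hdiv : HasDerivAt (fun t => t / r) (1 / r) x := by
      simpa using (hasDerivAt_id x).div_const r
    exact (hasDerivAt_arcsin (abs_lt.mp hxr).1.ne' (abs_lt.mp hxr).2.ne).comp x hdiv
  have hsum := (((hasDerivAt_id x).mul hsqrt).add (harcsin.const_mul (r ^ 2))).div_const 2
  refine hsum.congr_deriv ?_
  rw [sqrt_one_sub_div_sq hr]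
  have hs := sq_sqrt hpos.le
  have hs0 := sqrt_pos.mpr hpos
  field_simp
  simp only [id]
  nlinarith

lemma integral_sqrt_sq_sub_sq {r p q : ℝ} (hr : 0 < r) (hp : -r ≤ p) (hpq : p ≤ q) (hq : q ≤ r) :
    ∫ x in p..q, √(r ^ 2 - x ^ 2) = sqrtSqSubSqPrimitive r q - sqrtSqSubSqPrimitive r p := by
  have hcont : Continuous fun x => √(r ^ 2 - x ^ 2) := by fun_prop
  refine integral_eq_sub_of_hasDerivAt_of_le hpq (by unfold sqrtSqSubSqPrimitive; fun_prop)
    (fun x hx => hasDerivAt_sqrtSqSubSqPrimitive hr ?_) (hcont.intervalIntegrable _ _)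
  exact abs_lt.mpr ⟨hp.trans_lt hx.1, hx.2.trans_le hq⟩

lemma sqrtSqSubSqPrimitive_sub_of_sq_add_sq {r a c : ℝ} (hr : 0 < r) (ha : 0 ≤ a) (hc : 0 ≤ c)
    (h : a ^ 2 + c ^ 2 = r ^ 2) :
    sqrtSqSubSqPrimitive r c - sqrtSqSubSqPrimitive r a
      = r ^ 2 * arcsin (c / r) - π * r ^ 2 / 4 := by
  have hra : √(r ^ 2 - a ^ 2) = c := by rw [← h, add_sub_cancel_left, sqrt_sq hc]
  have hrc : √(r ^ 2 - c ^ 2) = a := by rw [← h, add_sub_cancel_right, sqrt_sq ha]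
  have harc : arcsin (a / r) = π / 2 - arcsin (c / r) := by
    rw [← hrc, ← sqrt_one_sub_div_sq hr, ← arccos_eq_arcsin (by positivity),
      arccos_eq_pi_div_two_sub_arcsin]
  simp only [sqrtSqSubSqPrimitive, hra, hrc, harc]
  ring

lemma integral_min_sqrt_sq_sub_sq {r c : ℝ} (hc : 0 < c) (hcr : c ≤ r) (hrc : r ^ 2 ≤ 2 * c ^ 2) :
    ∫ x in -c..c, min c √(r ^ 2 - x ^ 2)
      = 2 * c * √(r ^ 2 - c ^ 2) + 2 * r ^ 2 * arcsin (c / r) - π * r ^ 2 / 2 := by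
  set a := √(r ^ 2 - c ^ 2)
  set g : ℝ → ℝ := fun x => min c √(r ^ 2 - x ^ 2)
  have hr : 0 < r := hc.trans_le hcr
  have ha : 0 ≤ a := sqrt_nonneg _
  have ha2 : a ^ 2 + c ^ 2 = r ^ 2 := by rw [sq_sqrt (by nlinarith)]; ring
  have hac : a ≤ c := by nlinarith
  have hg : Continuous g := by fun_prop
  have heven : ∫ x in -c..0, g x = ∫ x in 0..c, g x := by
    simpa [g] using (integral_comp_neg (a := 0) (b := c) g).symm
  have hinner : ∫ x in 0..a, g x = a * c := by
    rw [integral_congr (g := fun _ => c), intervalIntegral.integral_const, smul_eq_mul, sub_zero]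
    intro x hx
    rw [uIcc_of_le ha, mem_Icc] at hx
    exact min_eq_left (le_sqrt_of_sq_le (by nlinarith))
  have houter : ∫ x in a..c, g x = ∫ x in a..c, √(r ^ 2 - x ^ 2) := by
    refine integral_congr fun x hx => min_eq_right (sqrt_le_iff.mpr ⟨hc.le, ?_⟩)
    rw [uIcc_of_le hac, mem_Icc] at hx
    nlinarith
  calc ∫ x in -c..c, g x = (∫ x in -c..0, g x) + ∫ x in 0..c, g x :=
        (integral_add_adjacent_intervals (hg.intervalIntegrable _ _)
          (hg.intervalIntegrable _ _)).symm
    _ = 2 * ((∫ x in 0..a, g x) + ∫ x in a..c, g x) := by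
        rw [heven, integral_add_adjacent_intervals (hg.intervalIntegrable _ _)
          (hg.intervalIntegrable _ _)]
        ring
    _ = 2 * (a * c + (r ^ 2 * arcsin (c / r) - π * r ^ 2 / 4)) := by
        rw [hinner, houter, integral_sqrt_sq_sub_sq hr (by linarith) hac hcr,
          sqrtSqSubSqPrimitive_sub_of_sq_add_sq hr ha hc.le ha2]
    _ = _ := by ring

lemma volume_region_between_cc_eq_integral {α : Type*} [MeasurableSpace α] {μ : Measure α}
    {f g : α → ℝ} {s : Set α} (hf : Measurable f) (hg : Measurable g) (hs : MeasurableSet s)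
    (hint : IntegrableOn (fun x => g x - f x) s μ) (hfg : ∀ x ∈ s, f x ≤ g x) :
    μ.prod volume {p : α × ℝ | p.1 ∈ s ∧ p.2 ∈ Icc (f p.1) (g p.1)}
      = ENNReal.ofReal (∫ x in s, g x - f x ∂μ) := by
  have hslice : ∀ x, volume (Prod.mk x ⁻¹' {p : α × ℝ | p.1 ∈ s ∧ p.2 ∈ Icc (f p.1) (g p.1)})
      = s.indicator (fun x => ENNReal.ofReal (g x - f x)) x := by
    intro x
    by_cases hx : x ∈ s
    · have : Prod.mk x ⁻¹' {p : α × ℝ | p.1 ∈ s ∧ p.2 ∈ Icc (f p.1) (g p.1)}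
          = Icc (f x) (g x) := by
        ext y; simp [hx]
      rw [this, Real.volume_Icc, indicator_of_mem hx]
    · simp [hx, preimage]
  rw [Measure.prod_apply (measurableSet_region_between_cc hf hg hs)]
  simp_rw [hslice]
  rw [lintegral_indicator hs, ofReal_integral_eq_lintegral_ofReal hint
    ((ae_restrict_iff' hs).mpr (.of_forall fun x hx => sub_nonneg.mpr (hfg x hx)))]

lemma mem_Icc_min_sqrt_iff {c r x y : ℝ} (hx : x ^ 2 ≤ r ^ 2) :
    y ∈ Icc (-min c √(r ^ 2 - x ^ 2)) (min c √(r ^ 2 - x ^ 2))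
      ↔ y ∈ Icc (-c) c ∧ x ^ 2 + y ^ 2 ≤ r ^ 2 := by
  rw [mem_Icc, mem_Icc, ← abs_le, ← abs_le, le_min_iff,
    le_sqrt (abs_nonneg y) (sub_nonneg.mpr hx), sq_abs, le_sub_iff_add_le']

lemma volume_square_inter_disk {c r : ℝ} (hc : 0 < c) (hcr : c ≤ r) (hrc : r ^ 2 ≤ 2 * c ^ 2) :
    (volume {p : ℝ × ℝ | p.1 ∈ Icc (-c) c ∧ p.2 ∈ Icc (-c) c ∧ p.1 ^ 2 + p.2 ^ 2 ≤ r ^ 2}).toReal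
      = 4 * c * √(r ^ 2 - c ^ 2) + 4 * r ^ 2 * arcsin (c / r) - π * r ^ 2 := by
  set m : ℝ → ℝ := fun x => min c √(r ^ 2 - x ^ 2) with hm_def
  have hm : Continuous m := by fun_prop
  have hm0 : ∀ x, 0 ≤ m x := fun x => le_min hc.le (sqrt_nonneg _)
  have hset : {p : ℝ × ℝ | p.1 ∈ Icc (-c) c ∧ p.2 ∈ Icc (-c) c ∧ p.1 ^ 2 + p.2 ^ 2 ≤ r ^ 2}
      = {p : ℝ × ℝ | p.1 ∈ Icc (-c) c ∧ p.2 ∈ Icc (-m p.1) (m p.1)} := by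
    ext ⟨x, y⟩
    simp only [mem_ofPred_eq, and_congr_right_iff]
    intro hx
    rw [hm_def, mem_Icc_min_sqrt_iff (by nlinarith [hx.1, hx.2])]
  rw [hset, Measure.volume_eq_prod, volume_region_between_cc_eq_integral (f := fun x => -m x)
      hm.measurable.neg hm.measurable measurableSet_Icc (hm.sub hm.neg).integrableOn_Icc
      fun x _ => neg_le_self (hm0 x),
    ENNReal.toReal_ofReal (setIntegral_nonneg measurableSet_Icc fun x _ => by linarith [hm0 x]),
    integral_Icc_eq_integral_Ioc, ← integral_of_le (by linarith)]
  simp_rw [sub_neg_eq_add, ← two_mul]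
  rw [intervalIntegral.integral_const_mul, integral_min_sqrt_sq_sub_sq hc hcr hrc]
  ring

theorem stmt_1_general (D d z : ℝ) (hD : 0 < D)
    (h1 : d ^ 2 + D ^ 2 / 4 ≤ z) (h2 : z < d ^ 2 + D ^ 2 / 2) :
    (volume {p : ℝ × ℝ | p.1 ∈ Icc (-(D / 2)) (D / 2) ∧ p.2 ∈ Icc (-(D / 2)) (D / 2) ∧
        p.1 ^ 2 + p.2 ^ 2 + d ^ 2 ≤ z}).toReal / D ^ 2
      = (2 * D * Real.sqrt (z - d ^ 2 - D ^ 2 / 4)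
          + 4 * (z - d ^ 2) * Real.arcsin (D / (2 * Real.sqrt (z - d ^ 2)))
          - π * (z - d ^ 2)) / D ^ 2 := by
  set r := √(z - d ^ 2)
  have hr2 : r ^ 2 = z - d ^ 2 := sq_sqrt (by nlinarith)
  have hcr : D / 2 ≤ r := (le_sqrt (by positivity) (by nlinarith)).mpr (by linarith)
  have hset : {p : ℝ × ℝ | p.1 ∈ Icc (-(D / 2)) (D / 2) ∧ p.2 ∈ Icc (-(D / 2)) (D / 2) ∧
      p.1 ^ 2 + p.2 ^ 2 + d ^ 2 ≤ z} = {p : ℝ × ℝ | p.1 ∈ Icc (-(D / 2)) (D / 2) ∧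
      p.2 ∈ Icc (-(D / 2)) (D / 2) ∧ p.1 ^ 2 + p.2 ^ 2 ≤ r ^ 2} := by
    simp_rw [hr2, le_sub_iff_add_le]
  rw [hset, volume_square_inter_disk (by positivity) hcr (by linarith), ← hr2, div_div,
    show r ^ 2 - (D / 2) ^ 2 = r ^ 2 - D ^ 2 / 4 by ring]
  ring

theorem stmt_1 (D d z : ℝ) (hD : 0 < D) (hd : 0 ≤ d)
    (h1 : d ^ 2 + D ^ 2 / 4 ≤ z) (h2 : z < d ^ 2 + D ^ 2 / 2) :
    (volume {p : ℝ × ℝ | p.1 ∈ Icc (-(D / 2)) (D / 2) ∧ p.2 ∈ Icc (-(D / 2)) (D / 2) ∧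
        p.1 ^ 2 + p.2 ^ 2 + d ^ 2 ≤ z}).toReal / D ^ 2
      = (2 * D * Real.sqrt (z - d ^ 2 - D ^ 2 / 4)
          + 4 * (z - d ^ 2) * Real.arcsin (D / (2 * Real.sqrt (z - d ^ 2)))
          - π * (z - d ^ 2)) / D ^ 2 :=
  stmt_1_general D d z hD h1 h2
end

section
/- Let Z₂ = x₂² + y₂² + d² with (x₂, y₂) uniform on [D/2, 3D/2] × [-D/2, D/2]. Then for d² + D²/4 ≤ z < d² + D²/2, the CDF of Z₂ is F(z) = (1/D²)(π(z-d²)/2 − ħ/4) with ħ = 2D√(z−d²−D²/4) + 4(z−d²)arcsin(D/(2√(z−d²))). -/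
set_option maxHeartbeats 1000000

open MeasureTheory Set Real

lemma graph_null (g : ℝ → ℝ) (hg : Measurable g) :
    volume {p : ℝ × ℝ | p.2 = g p.1} = 0 := by
  have hmeas : MeasurableSet {p : ℝ × ℝ | p.2 = g p.1} := by
    have : {p : ℝ × ℝ | p.2 = g p.1} = (fun p : ℝ × ℝ => p.2 - g p.1) ⁻¹' {0} := by
      ext p; simp [sub_eq_zero]
    rw [this]
    exact (measurable_snd.sub (hg.comp measurable_fst)) (measurableSet_singleton 0)
  rw [show (volume : Measure (ℝ × ℝ)) = (volume : Measure ℝ).prod volume from Measure.volume_eq_prod ..]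
  rw [Measure.prod_apply hmeas]
  have : ∀ x : ℝ, (volume (Prod.mk x ⁻¹' {p : ℝ × ℝ | p.2 = g p.1}) : ENNReal) = 0 := by
    intro x
    have : Prod.mk x ⁻¹' {p : ℝ × ℝ | p.2 = g p.1} = {g x} := by
      ext y; simp
    rw [this]; simp
  simp [this]

theorem stmt_6 (D d z : ℝ) (hD : 0 < D) (hd : 0 ≤ d)
    (h1 : d ^ 2 + D ^ 2 / 4 ≤ z) (h2 : z < d ^ 2 + D ^ 2 / 2) :
    (volume {p : ℝ × ℝ | p.1 ∈ Icc (D / 2) (3 * D / 2) ∧ p.2 ∈ Icc (-(D / 2)) (D / 2) ∧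
        p.1 ^ 2 + p.2 ^ 2 + d ^ 2 ≤ z}).toReal / D ^ 2
      = (1 / D ^ 2) * (π * (z - d ^ 2) / 2
          - (2 * D * Real.sqrt (z - d ^ 2 - D ^ 2 / 4)
              + 4 * (z - d ^ 2) * Real.arcsin (D / (2 * Real.sqrt (z - d ^ 2)))) / 4) := by
  set c : ℝ := z - d ^ 2 with hc
  have hc1 : D ^ 2 / 4 ≤ c := by simp [hc]; linarith
  have hc2 : c < D ^ 2 / 2 := by simp [hc]; linarith
  have hcpos : 0 < c := lt_of_lt_of_le (by positivity) hc1
  set r : ℝ := Real.sqrt c with hr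
  have hr2 : r ^ 2 = c := Real.sq_sqrt hcpos.le
  have hrpos : 0 < r := Real.sqrt_pos.mpr hcpos
  have hD2r : D / 2 ≤ r := by
    rw [hr]
    have : D / 2 = Real.sqrt (D ^ 2 / 4) := by
      rw [show D ^ 2 / 4 = (D / 2) ^ 2 by ring, Real.sqrt_sq (by positivity)]
    rw [this]; exact Real.sqrt_le_sqrt hc1
  have hrlt : r < D := by
    rw [hr]
    have : Real.sqrt c < Real.sqrt (D ^ 2) := by
      apply Real.sqrt_lt_sqrt hcpos.le; nlinarith
    rwa [Real.sqrt_sq hD.le] at this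
  set g : ℝ → ℝ := fun x => Real.sqrt (c - x ^ 2) with hg
  set f : ℝ → ℝ := fun x => -Real.sqrt (c - x ^ 2) with hf
  have hgc : Continuous g := by
    apply Real.continuous_sqrt.comp; continuity
  have hfc : Continuous f := hgc.neg
  -- set identification
  set S := {p : ℝ × ℝ | p.1 ∈ Icc (D / 2) (3 * D / 2) ∧ p.2 ∈ Icc (-(D / 2)) (D / 2) ∧
        p.1 ^ 2 + p.2 ^ 2 + d ^ 2 ≤ z} with hS
  have hSeq : S = {p : ℝ × ℝ | p.1 ∈ Icc (D / 2) r ∧ p.2 ∈ Icc (f p.1) (g p.1)} := by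
    ext p
    simp only [hS, mem_setOf_eq, mem_Icc]
    constructor
    · rintro ⟨⟨hx1, hx2⟩, ⟨hy1, hy2⟩, hz⟩
      have hxc : p.1 ^ 2 ≤ c := by nlinarith
      have hxr : p.1 ≤ r := by
        have := Real.abs_le_sqrt hxc
        rw [← hr] at this
        exact (abs_le.mp this).2
      have hyg : |p.2| ≤ g p.1 := Real.abs_le_sqrt (by nlinarith)
      refine ⟨⟨hx1, hxr⟩, ?_, (abs_le.mp hyg).2⟩
      · have := (abs_le.mp hyg).1; simpa [hf] using this
    · rintro ⟨⟨hx1, hx2⟩, hy1, hy2⟩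
      have hx0 : 0 ≤ p.1 := le_trans (by positivity) hx1
      have hxc : p.1 ^ 2 ≤ c := by nlinarith [hr2, Real.sqrt_nonneg c]
      have habs : |p.2| ≤ Real.sqrt (c - p.1 ^ 2) := by
        rw [abs_le]; exact ⟨by simpa [hf] using hy1, hy2⟩
      have hy2c : p.2 ^ 2 ≤ c - p.1 ^ 2 := by
        have h5 := pow_le_pow_left₀ (abs_nonneg p.2) habs 2
        rwa [sq_abs, Real.sq_sqrt (by linarith : (0:ℝ) ≤ c - p.1 ^ 2)] at h5
      have hyD : |p.2| ≤ D / 2 := by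
        have h3 : Real.sqrt (c - p.1 ^ 2) ≤ Real.sqrt (D ^ 2 / 4) :=
          Real.sqrt_le_sqrt (by nlinarith)
        have h4 : Real.sqrt (D ^ 2 / 4) = D / 2 := by
          rw [show D ^ 2 / 4 = (D / 2) ^ 2 by ring, Real.sqrt_sq (by positivity)]
        calc |p.2| ≤ Real.sqrt (c - p.1 ^ 2) := habs
          _ ≤ D / 2 := h4 ▸ h3
      exact ⟨⟨hx1, by linarith⟩, ⟨(abs_le.mp hyD).1, (abs_le.mp hyD).2⟩, by simp only [hc] at hy2c ⊢; linarith⟩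
  -- volume via regionBetween
  have hRsub : regionBetween f g (Icc (D / 2) r) ⊆ S := by
    rw [hSeq]
    rintro p ⟨hp1, hp2⟩
    exact ⟨hp1, Ioo_subset_Icc_self hp2⟩
  have hSsub : S ⊆ regionBetween f g (Icc (D / 2) r)
      ∪ {p : ℝ × ℝ | p.2 = f p.1} ∪ {p : ℝ × ℝ | p.2 = g p.1} := by
    rw [hSeq]
    rintro p ⟨hp1, hp2⟩
    rcases lt_or_eq_of_le hp2.1 with h | h
    · rcases lt_or_eq_of_le hp2.2 with h' | h'
      · exact Or.inl (Or.inl ⟨hp1, h, h'⟩)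
      · exact Or.inr h'
    · exact Or.inl (Or.inr h.symm)
  have hvol : volume S = volume (regionBetween f g (Icc (D / 2) r)) := by
    apply le_antisymm
    · calc volume S ≤ volume (regionBetween f g (Icc (D / 2) r)
            ∪ {p : ℝ × ℝ | p.2 = f p.1} ∪ {p : ℝ × ℝ | p.2 = g p.1}) := measure_mono hSsub
        _ ≤ volume (regionBetween f g (Icc (D / 2) r) ∪ {p : ℝ × ℝ | p.2 = f p.1})
            + volume {p : ℝ × ℝ | p.2 = g p.1} := measure_union_le _ _
        _ ≤ volume (regionBetween f g (Icc (D / 2) r)) + volume {p : ℝ × ℝ | p.2 = f p.1}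
            + volume {p : ℝ × ℝ | p.2 = g p.1} := by
              gcongr; exact measure_union_le _ _
        _ = volume (regionBetween f g (Icc (D / 2) r)) := by
              rw [graph_null f hfc.measurable, graph_null g hgc.measurable]; simp
    · exact measure_mono hRsub
  have hgint : IntegrableOn g (Icc (D / 2) r) := hgc.integrableOn_Icc
  have hfint : IntegrableOn f (Icc (D / 2) r) := hfc.integrableOn_Icc
  have hvol2 : volume (regionBetween f g (Icc (D / 2) r))
      = ENNReal.ofReal (∫ x in Icc (D / 2) r, (g - f) x) := by
    have := volume_regionBetween_eq_integral hfint hgint measurableSet_Icc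
      (fun x _ => by simp [hf, hg, neg_le_self (Real.sqrt_nonneg _)])
    rw [show (volume : Measure (ℝ × ℝ)) = (volume : Measure ℝ).prod volume from Measure.volume_eq_prod ..]
    exact this
  -- the integral
  have hint : ∫ x in Icc (D / 2) r, (g - f) x
      = ∫ x in (D / 2)..r, 2 * Real.sqrt (c - x ^ 2) := by
    rw [MeasureTheory.integral_Icc_eq_integral_Ioc, intervalIntegral.integral_of_le hD2r]
    apply setIntegral_congr_fun measurableSet_Ioc
    intro x _; simp [hg, hf]; ring
  set H : ℝ → ℝ := fun x => x * Real.sqrt (c - x ^ 2) + c * Real.arcsin (x / r) with hH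
  have hderiv : ∀ x ∈ Ioo (D / 2) r, HasDerivAt H (2 * Real.sqrt (c - x ^ 2)) x := by
    intro x hx
    have hx0 : 0 < x := lt_of_le_of_lt (by positivity) hx.1
    have hxc : x ^ 2 < c := by nlinarith [hx.2, hr2]
    have hpos : 0 < c - x ^ 2 := by linarith
    have hsq : HasDerivAt (fun y : ℝ => Real.sqrt (c - y ^ 2)) (-x / Real.sqrt (c - x ^ 2)) x := by
      have h1 : HasDerivAt (fun y : ℝ => c - y ^ 2) (-(2 * x)) x := by
        simpa using ((hasDerivAt_pow 2 x).const_sub c)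
      have := (Real.hasDerivAt_sqrt hpos.ne').comp x h1
      exact this.congr_deriv (by ring)
    have harc : HasDerivAt (fun y : ℝ => Real.arcsin (y / r)) (1 / (r * Real.sqrt (1 - (x / r) ^ 2))) x := by
      have hne1 : x / r ≠ -1 := by
        have : 0 < x / r := by positivity
        linarith
      have hne2 : x / r ≠ 1 := by
        have : x / r < 1 := (div_lt_one hrpos).mpr hx.2
        linarith
      have h1 : HasDerivAt (fun y : ℝ => y / r) (1 / r) x := by
        simpa using (hasDerivAt_id x).div_const r
      have := (Real.hasDerivAt_arcsin hne1 hne2).comp x h1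
      exact this.congr_deriv (by ring)
    have hmul : HasDerivAt (fun y : ℝ => y * Real.sqrt (c - y ^ 2))
        (Real.sqrt (c - x ^ 2) + x * (-x / Real.sqrt (c - x ^ 2))) x := by
      exact ((hasDerivAt_id' x).mul hsq).congr_deriv (by ring)
    have := hmul.add ((harc.const_mul c))
    refine this.congr_deriv (Eq.symm ?_)
    have hs : Real.sqrt (c - x ^ 2) > 0 := Real.sqrt_pos.mpr hpos
    have h1mx : Real.sqrt (1 - (x / r) ^ 2) = Real.sqrt (c - x ^ 2) / r := by
      have he : 1 - (x / r) ^ 2 = (c - x ^ 2) / r ^ 2 := by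
        rw [← hr2]; field_simp
      rw [he, Real.sqrt_div hpos.le, Real.sqrt_sq hrpos.le]
    rw [h1mx, show r * (Real.sqrt (c - x ^ 2) / r) = Real.sqrt (c - x ^ 2) by
      field_simp]
    have hsq2 : Real.sqrt (c - x ^ 2) ^ 2 = c - x ^ 2 := Real.sq_sqrt hpos.le
    field_simp
    nlinarith [hsq2]
  have hHcont : ContinuousOn H (Icc (D / 2) r) := by
    apply ContinuousOn.add
    · exact (continuous_id.mul hgc).continuousOn
    · exact (continuousOn_const.mul ((Real.continuous_arcsin.comp
        (continuous_id.div_const r)).continuousOn))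
  have hintble : IntervalIntegrable (fun x => 2 * Real.sqrt (c - x ^ 2)) volume (D / 2) r := by
    apply Continuous.intervalIntegrable
    exact continuous_const.mul hgc
  have hFTC : ∫ x in (D / 2)..r, 2 * Real.sqrt (c - x ^ 2) = H r - H (D / 2) :=
    intervalIntegral.integral_eq_sub_of_hasDeriv_right_of_le hD2r hHcont
      (fun x hx => (hderiv x hx).hasDerivWithinAt) hintble
  have hHr : H r = c * (π / 2) := by
    simp only [hH]
    rw [div_self hrpos.ne', Real.arcsin_one, show c - r ^ 2 = 0 by rw [hr2]; ring, Real.sqrt_zero]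
    ring
  have hHD : H (D / 2) = D / 2 * Real.sqrt (c - D ^ 2 / 4) + c * Real.arcsin (D / (2 * r)) := by
    simp only [hH]
    rw [show (D / 2) ^ 2 = D ^ 2 / 4 by ring, show D / 2 / r = D / (2 * r) by ring]
  have hval : ∫ x in Icc (D / 2) r, (g - f) x
      = c * (π / 2) - (D / 2 * Real.sqrt (c - D ^ 2 / 4) + c * Real.arcsin (D / (2 * r))) := by
    rw [hint, hFTC, hHr, hHD]
  have hnonneg : 0 ≤ ∫ x in Icc (D / 2) r, (g - f) x := by
    apply setIntegral_nonneg measurableSet_Icc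
    intro x _
    have : (g - f) x = 2 * Real.sqrt (c - x ^ 2) := by simp [hg, hf]; ring
    rw [this]; positivity
  rw [hvol, hvol2, ENNReal.toReal_ofReal hnonneg, hval]
  ring
end

section
/- For all D > 0, d ≥ 0 and z ∈ [d², d² + D²/4], one has 2√(z − d²)/D ≥ π(z − d²)/D², with equality only at z = d² and z = d² + 4D²/π² (if within range). In particular the PASS CDF F_{Z₃}(z) = 2√(z−d²)/D dominates the CASS CDF F_{Z₁}(z) = π(z−d²)/D² on this interval. -/
open Real

theorem stmt_11 (D d : ℝ) (hD : 0 < D) (hd : 0 ≤ d) :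
    ∀ z ∈ Set.Icc (d ^ 2) (d ^ 2 + D ^ 2 / 4),
      π * (z - d ^ 2) / D ^ 2 ≤ 2 * Real.sqrt (z - d ^ 2) / D ∧
      (2 * Real.sqrt (z - d ^ 2) / D = π * (z - d ^ 2) / D ^ 2 →
        z = d ^ 2 ∨ z = d ^ 2 + 4 * D ^ 2 / π ^ 2) := by
  intro z hz
  obtain ⟨h1, h2⟩ := hz
  set t := Real.sqrt (z - d ^ 2) with ht
  have hzd : 0 ≤ z - d ^ 2 := by linarith
  have ht0 : 0 ≤ t := Real.sqrt_nonneg _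
  have htsq : t ^ 2 = z - d ^ 2 := Real.sq_sqrt hzd
  have htle : t ≤ D / 2 := by
    have : t ≤ Real.sqrt (D ^ 2 / 4) := Real.sqrt_le_sqrt (by linarith)
    have h4 : Real.sqrt (D ^ 2 / 4) = D / 2 := by
      rw [show D ^ 2 / 4 = (D / 2) ^ 2 by ring]
      exact Real.sqrt_sq (by linarith)
    linarith [this, h4 ▸ this]
  have hpi : π * t ≤ 2 * D := by
    have h1 : π * t ≤ π * (D / 2) := by
      exact mul_le_mul_of_nonneg_left htle Real.pi_pos.le
    have h2 : π ≤ 4 := by linarith [Real.pi_le_four]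
    nlinarith [Real.pi_pos]
  constructor
  · rw [← htsq]
    rw [div_le_div_iff₀ (by positivity) hD]
    nlinarith [mul_nonneg (mul_nonneg ht0 hD.le) (by linarith : (0:ℝ) ≤ 2 * D - π * t)]
  · intro heq
    rw [← htsq] at heq
    have hD2 : (0:ℝ) < D ^ 2 := by positivity
    have key : t * (2 * D - π * t) = 0 := by
      field_simp at heq
      nlinarith [heq]
    rcases mul_eq_zero.mp key with h | h
    · left
      have : z - d ^ 2 = 0 := by rw [← htsq, h]; ring
      linarith
    · right
      have htv : t = 2 * D / π := by
        field_simp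
        linarith
      have : z - d ^ 2 = 4 * D ^ 2 / π ^ 2 := by
        rw [← htsq, htv]; field_simp; ring
      linarith
end

section
/- Define Δ₁(z) = F_{Z₃}(z) − F_{Z₁}(z) where F_{Z₃}(z) = min(1, 2√(max(z−d²,0))/D) and F_{Z₁} is the CDF of x²+y²+d² for (x,y) uniform on [-D/2,D/2]². Then Δ₁(z) ≥ 0 for all z, Δ₁(z) = 0 for z ≤ d² and for z ≥ d² + D²/2. -/
open MeasureTheory Set Real

theorem stmt_13 (D d : ℝ) (hD : 0 < D) (hd : 0 ≤ d) :
    let F₁ : ℝ → ℝ := fun z =>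
      (volume {p : ℝ × ℝ | p.1 ∈ Icc (-(D / 2)) (D / 2) ∧ p.2 ∈ Icc (-(D / 2)) (D / 2) ∧
          p.1 ^ 2 + p.2 ^ 2 + d ^ 2 ≤ z}).toReal / D ^ 2
    let F₃ : ℝ → ℝ := fun z => min 1 (2 * Real.sqrt (max (z - d ^ 2) 0) / D)
    let Δ : ℝ → ℝ := fun z => F₃ z - F₁ z
    (∀ z : ℝ, 0 ≤ Δ z) ∧
    (∀ z : ℝ, z ≤ d ^ 2 → Δ z = 0) ∧
    (∀ z : ℝ, d ^ 2 + D ^ 2 / 2 ≤ z → Δ z = 0) := by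
  intro F₁ F₃ Δ
  have hD2 : (0:ℝ) < D ^ 2 := by positivity
  set S : ℝ → Set (ℝ × ℝ) := fun z =>
    {p : ℝ × ℝ | p.1 ∈ Icc (-(D / 2)) (D / 2) ∧ p.2 ∈ Icc (-(D / 2)) (D / 2) ∧
      p.1 ^ 2 + p.2 ^ 2 + d ^ 2 ≤ z} with hS
  have hprod : ∀ a b : ℝ, volume (Icc (-a) a ×ˢ Icc (-b) b)
      = ENNReal.ofReal (2 * a) * ENNReal.ofReal (2 * b) := by
    intro a b
    rw [Measure.volume_eq_prod, Measure.prod_prod, Real.volume_Icc, Real.volume_Icc]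
    congr 1 <;> congr 1 <;> ring
  -- bound 1 : volume ≤ strip
  have h1 : ∀ z : ℝ, (volume (S z)).toReal ≤ 2 * Real.sqrt (max (z - d ^ 2) 0) * D := by
    intro z
    set s := Real.sqrt (max (z - d ^ 2) 0) with hs
    have hs0 : 0 ≤ s := Real.sqrt_nonneg _
    have hsub : S z ⊆ Icc (-s) s ×ˢ Icc (-(D/2)) (D/2) := by
      rintro ⟨x, y⟩ ⟨hx, hy, hle⟩
      refine ⟨?_, hy⟩
      have hx2 : x ^ 2 ≤ max (z - d ^ 2) 0 := by
        have h0 : (0:ℝ) ≤ y ^ 2 := sq_nonneg y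
        have : x ^ 2 ≤ z - d ^ 2 := by nlinarith
        exact le_max_of_le_left this
      have habs : |x| ≤ s := by
        rw [hs, ← Real.sqrt_sq_eq_abs]
        exact Real.sqrt_le_sqrt hx2
      exact abs_le.mp habs
    have this : volume (S z) ≤ volume (Icc (-s) s ×ˢ Icc (-(D/2)) (D/2)) :=
      measure_mono hsub
    rw [hprod] at this
    calc (volume (S z)).toReal
        ≤ (ENNReal.ofReal (2 * s) * ENNReal.ofReal (2 * (D/2))).toReal := by
          apply ENNReal.toReal_mono _ this
          exact ENNReal.mul_ne_top ENNReal.ofReal_ne_top ENNReal.ofReal_ne_top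
      _ = (2 * s) * D := by
          rw [ENNReal.toReal_mul, ENNReal.toReal_ofReal (by positivity),
            ENNReal.toReal_ofReal (by positivity)]
          ring
  -- bound 2 : volume ≤ square
  have h2 : ∀ z : ℝ, (volume (S z)).toReal ≤ D ^ 2 := by
    intro z
    have hsub : S z ⊆ Icc (-(D/2)) (D/2) ×ˢ Icc (-(D/2)) (D/2) := by
      rintro ⟨x, y⟩ ⟨hx, hy, _⟩; exact ⟨hx, hy⟩
    have this : volume (S z) ≤ volume (Icc (-(D/2)) (D/2) ×ˢ Icc (-(D/2)) (D/2)) :=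
      measure_mono hsub
    rw [hprod] at this
    calc (volume (S z)).toReal
        ≤ (ENNReal.ofReal (2 * (D/2)) * ENNReal.ofReal (2 * (D/2))).toReal := by
          apply ENNReal.toReal_mono _ this
          exact ENNReal.mul_ne_top ENNReal.ofReal_ne_top ENNReal.ofReal_ne_top
      _ = D ^ 2 := by
          rw [ENNReal.toReal_mul, ENNReal.toReal_ofReal (by positivity)]
          ring
  have hF1nonneg : ∀ z : ℝ, 0 ≤ F₁ z := by
    intro z
    exact div_nonneg ENNReal.toReal_nonneg (le_of_lt hD2)
  have hle : ∀ z : ℝ, F₁ z ≤ F₃ z := by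
    intro z
    refine le_min ?_ ?_
    · exact (div_le_one hD2).mpr (h2 z)
    · have := h1 z
      have key : (volume (S z)).toReal / D ^ 2
          ≤ (2 * Real.sqrt (max (z - d ^ 2) 0) * D) / D ^ 2 := by
        gcongr
      have heq : (2 * Real.sqrt (max (z - d ^ 2) 0) * D) / D ^ 2
          = 2 * Real.sqrt (max (z - d ^ 2) 0) / D := by
        field_simp
      calc F₁ z ≤ (2 * Real.sqrt (max (z - d ^ 2) 0) * D) / D ^ 2 := key
        _ = 2 * Real.sqrt (max (z - d ^ 2) 0) / D := heq
  refine ⟨fun z => sub_nonneg.mpr (hle z), ?_, ?_⟩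
  · intro z hz
    have hF3 : F₃ z = 0 := by
      show min 1 (2 * Real.sqrt (max (z - d ^ 2) 0) / D) = 0
      rw [max_eq_right (by linarith), Real.sqrt_zero]
      simp
    have h0 : F₁ z = 0 := le_antisymm (hF3 ▸ hle z) (hF1nonneg z)
    show F₃ z - F₁ z = 0
    rw [hF3, h0, sub_zero]
  · intro z hz
    have hF3 : F₃ z = 1 := by
      show min 1 (2 * Real.sqrt (max (z - d ^ 2) 0) / D) = 1
      have hmax : max (z - d ^ 2) 0 = z - d ^ 2 := max_eq_left (by nlinarith)
      have hsq : D / 2 ≤ Real.sqrt (z - d ^ 2) := by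
        have h' : (D / 2) ^ 2 ≤ z - d ^ 2 := by nlinarith
        calc D / 2 = Real.sqrt ((D / 2) ^ 2) := (Real.sqrt_sq (by positivity)).symm
          _ ≤ Real.sqrt (z - d ^ 2) := Real.sqrt_le_sqrt h'
      rw [hmax]
      refine min_eq_left ?_
      rw [le_div_iff₀ hD]
      linarith
    have hSq : S z = Icc (-(D/2)) (D/2) ×ˢ Icc (-(D/2)) (D/2) := by
      ext ⟨x, y⟩
      constructor
      · rintro ⟨hx, hy, _⟩; exact ⟨hx, hy⟩
      · rintro ⟨hx, hy⟩
        refine ⟨hx, hy, ?_⟩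
        rcases hx with ⟨hx1, hx2⟩
        rcases hy with ⟨hy1, hy2⟩
        nlinarith
    have hF1 : F₁ z = 1 := by
      show (volume (S z)).toReal / D ^ 2 = 1
      rw [hSq, hprod, ENNReal.toReal_mul, ENNReal.toReal_ofReal (by positivity)]
      field_simp
    show F₃ z - F₁ z = 0
    rw [hF3, hF1, sub_self]
end

section
/- Fix ω > 0, α > 0, and let Z, Z' be bounded positive random variables with E[Z^{α/2}] ≤ E[Z'^{α/2}]. Define P(ρ) = E[1 − e^{−ωZ^{α/2}/ρ}] and P'(ρ) = E[1 − e^{−ωZ'^{α/2}/ρ}]. Then ρ·(P'(ρ) − P(ρ)) → ω(E[Z'^{α/2}] − E[Z^{α/2}]) as ρ → ∞; in particular P'(ρ) − P(ρ) → 0, and both systems have the same diversity order 1 (assuming E[Z^{α/2}] > 0). -/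
/-!
Since `1 - e^{-t} = t + o(t)` and `0 ≤ 1 - e^{-t} ≤ t` for `t ≥ 0`, the integrand
`ρ (1 - e^{-Y/ρ})` tends to `Y` and is dominated by it, so `ρ P(ρ) → ω E[Z^{α/2}]` by dominated
convergence, and likewise for `P'`. Subtracting the two limits gives the first claim, dividing by `ρ`
the second, and taking logarithms in `ρ P(ρ) → L > 0` shows `-log P(ρ) / log ρ → 1`.
-/

open MeasureTheory Set Real Filter Topology

lemma tendsto_mul_one_sub_exp_neg_div_atTop (a : ℝ) :
    Tendsto (fun ρ : ℝ => ρ * (1 - exp (-(a / ρ)))) atTop (𝓝 a) := by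
  have hderiv : HasDerivAt (fun t : ℝ => 1 - exp (-(a * t))) a 0 := by
    simpa using ((hasDerivAt_id (0 : ℝ)).const_mul a).neg.exp.const_sub 1
  have hslope := (hasDerivAt_iff_tendsto_slope_zero.mp hderiv).comp
    (tendsto_inv_atTop_nhdsGT_zero.mono_right (nhdsWithin_mono _ fun _ h => ne_of_gt h))
  refine hslope.congr fun ρ => ?_
  simp [div_eq_mul_inv]

lemma one_sub_exp_neg_mem_Icc {t : ℝ} (ht : 0 ≤ t) : 1 - exp (-t) ∈ Icc 0 t :=
  ⟨sub_nonneg.mpr (exp_le_one_iff.mpr (neg_nonpos.mpr ht)), by linarith [one_sub_le_exp_neg t]⟩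

lemma norm_mul_one_sub_exp_neg_div_le {ρ y : ℝ} (hρ : 0 < ρ) (hy : 0 ≤ y) :
    ‖ρ * (1 - exp (-(y / ρ)))‖ ≤ y := by
  obtain ⟨hlow, hup⟩ := one_sub_exp_neg_mem_Icc (div_nonneg hy hρ.le)
  rw [norm_of_nonneg (mul_nonneg hρ.le hlow)]
  calc ρ * (1 - exp (-(y / ρ))) ≤ ρ * (y / ρ) := mul_le_mul_of_nonneg_left hup hρ.le
    _ = y := mul_div_cancel₀ y hρ.ne'

theorem tendsto_mul_integral_one_sub_exp_neg_div_atTop {Ω : Type*} [MeasurableSpace Ω]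
    {μ : Measure Ω} {Y : Ω → ℝ} (hY : Integrable Y μ) (hY0 : 0 ≤ᵐ[μ] Y) :
    Tendsto (fun ρ : ℝ => ρ * ∫ x, (1 - exp (-(Y x / ρ))) ∂μ) atTop (𝓝 (∫ x, Y x ∂μ)) := by
  simp_rw [← integral_const_mul]
  refine tendsto_integral_filter_of_dominated_convergence Y (.of_forall fun ρ => ?_) ?_ hY
    (.of_forall fun x => tendsto_mul_one_sub_exp_neg_div_atTop (Y x))
  · exact (by fun_prop : Continuous fun y : ℝ => ρ * (1 - exp (-(y / ρ)))).comp_aestronglyMeasurable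
      hY.aestronglyMeasurable
  · filter_upwards [eventually_gt_atTop 0] with ρ hρ
    filter_upwards [hY0] with x hx
    exact norm_mul_one_sub_exp_neg_div_le hρ hx

lemma tendsto_neg_log_div_log_atTop_of_tendsto_rpow_mul {f : ℝ → ℝ} {d L : ℝ} (hL : 0 < L)
    (h : Tendsto (fun ρ => ρ ^ d * f ρ) atTop (𝓝 L)) :
    Tendsto (fun ρ => -log (f ρ) / log ρ) atTop (𝓝 d) := by
  have hlog : Tendsto (fun ρ => log (ρ ^ d * f ρ) / log ρ) atTop (𝓝 0) :=
    ((continuousAt_log hL.ne').tendsto.comp h).div_atTop tendsto_log_atTop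
  have hd := (tendsto_const_nhds (x := d)).sub hlog
  rw [sub_zero] at hd
  refine hd.congr' ?_
  filter_upwards [h.eventually (eventually_gt_nhds hL), eventually_gt_atTop 1] with ρ hpos hρ
  have hρ0 : 0 < ρ := one_pos.trans hρ
  have hf : 0 < f ρ := pos_of_mul_pos_right hpos (rpow_pos_of_pos hρ0 d).le
  rw [log_mul (rpow_pos_of_pos hρ0 d).ne' hf.ne', log_rpow hρ0]
  field_simp [(log_pos hρ).ne']
  ring

lemma tendsto_zero_of_tendsto_mul_atTop {g : ℝ → ℝ} {L : ℝ}
    (h : Tendsto (fun ρ => ρ * g ρ) atTop (𝓝 L)) : Tendsto g atTop (𝓝 0) := by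
  have h0 := h.mul tendsto_inv_atTop_zero
  rw [mul_zero] at h0
  refine h0.congr' ?_
  filter_upwards [eventually_ne_atTop 0] with ρ hρ
  field_simp

lemma integrable_rpow_of_ae_bounded {Ω : Type*} [MeasurableSpace Ω] {μ : Measure Ω}
    [IsFiniteMeasure μ] {Z : Ω → ℝ} (hZ : Measurable Z) (hZ0 : ∀ᵐ x ∂μ, 0 ≤ Z x) {C : ℝ}
    (hZC : ∀ᵐ x ∂μ, Z x ≤ C) {p : ℝ} (hp : 0 ≤ p) :
    Integrable (fun x => Z x ^ p) μ := by
  refine .of_bound (hZ.pow_const p).aestronglyMeasurable (C ^ p) ?_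
  filter_upwards [hZ0, hZC] with x h0 hC
  rw [norm_of_nonneg (rpow_nonneg h0 p)]
  exact rpow_le_rpow h0 hC hp

theorem stmt_18 {Ω : Type*} [MeasurableSpace Ω] (μ : Measure Ω) [IsProbabilityMeasure μ]
    (Z Z' : Ω → ℝ) (hZ : Measurable Z) (hZ' : Measurable Z')
    (hZpos : ∀ᵐ x ∂μ, 0 < Z x) (hZ'pos : ∀ᵐ x ∂μ, 0 < Z' x)
    (C : ℝ) (hZbdd : ∀ᵐ x ∂μ, Z x ≤ C) (hZ'bdd : ∀ᵐ x ∂μ, Z' x ≤ C)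
    (w α : ℝ) (hw : 0 < w) (hα : 0 < α)
    (hE : ∫ x, Z x ^ (α / 2) ∂μ ≤ ∫ x, Z' x ^ (α / 2) ∂μ)
    (hE0 : 0 < ∫ x, Z x ^ (α / 2) ∂μ) :
    let P : ℝ → ℝ := fun ρ => ∫ x, (1 - Real.exp (-(w * Z x ^ (α / 2) / ρ))) ∂μ
    let P' : ℝ → ℝ := fun ρ => ∫ x, (1 - Real.exp (-(w * Z' x ^ (α / 2) / ρ))) ∂μ
    Tendsto (fun ρ => ρ * (P' ρ - P ρ)) atTop
      (nhds (w * ((∫ x, Z' x ^ (α / 2) ∂μ) - ∫ x, Z x ^ (α / 2) ∂μ))) ∧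
    Tendsto (fun ρ => P' ρ - P ρ) atTop (nhds 0) ∧
    Tendsto (fun ρ => -Real.log (P ρ) / Real.log ρ) atTop (nhds 1) ∧
    Tendsto (fun ρ => -Real.log (P' ρ) / Real.log ρ) atTop (nhds 1) := by
  intro P P'
  have hp : 0 ≤ α / 2 := by positivity
  have limit_of {Y : Ω → ℝ} (hY : Measurable Y) (hY0 : ∀ᵐ x ∂μ, 0 < Y x)
      (hYC : ∀ᵐ x ∂μ, Y x ≤ C) :
      Tendsto (fun ρ : ℝ => ρ * ∫ x, (1 - exp (-(w * Y x ^ (α / 2) / ρ))) ∂μ) atTop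
        (𝓝 (w * ∫ x, Y x ^ (α / 2) ∂μ)) := by
    rw [← integral_const_mul]
    refine tendsto_mul_integral_one_sub_exp_neg_div_atTop
      ((integrable_rpow_of_ae_bounded hY (hY0.mono fun _ h => h.le) hYC hp).const_mul w) ?_
    filter_upwards [hY0] with x hx
    exact mul_nonneg hw.le (rpow_nonneg hx.le _)
  have hP := limit_of hZ hZpos hZbdd
  have hP' := limit_of hZ' hZ'pos hZ'bdd
  have hdiff : Tendsto (fun ρ => ρ * (P' ρ - P ρ)) atTop
      (𝓝 (w * ((∫ x, Z' x ^ (α / 2) ∂μ) - ∫ x, Z x ^ (α / 2) ∂μ))) := by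
    simpa only [mul_sub] using hP'.sub hP
  refine ⟨hdiff, tendsto_zero_of_tendsto_mul_atTop hdiff,
    tendsto_neg_log_div_log_atTop_of_tendsto_rpow_mul (mul_pos hw hE0) ?_,
    tendsto_neg_log_div_log_atTop_of_tendsto_rpow_mul (mul_pos hw (hE0.trans_le hE)) ?_⟩
  · simpa only [rpow_one] using hP
  · simpa only [rpow_one] using hP'
end
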